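/- The highest power of 5 dividing the fibonomial coefficient C(m+n, m)_F equals the number of carries that occur when m is added to n in base 5; that is, ν₅(C(m+n, m)_F) equals the number of indices i ≥ 0 such that (m mod 5^{i+1}) + (n mod 5^{i+1}) ≥ 5^{i+1}. -/

import Mathlib

/-!
Since `F_5 = 5` and `gcd (F_a) (F_b) = F_(gcd a b)`, the prime 5 divides `F_n` exactly when it
divides `n`; and the quintuplication formula `F_{5n} = 5 F_n (5 F_n² (F_n² ± 1) + 1)` shows that
passing from `n` to `5n` raises `ν₅` by exactly one. Hence `ν₅(F_n) = ν₅(n)`, so `ν₅(n!_F) = ν₅(n!)`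
and `ν₅ C(m+n, m)_F = ν₅ C(m+n, m)`, which Kummer's theorem counts as the number of carries.
-/

/-- The fibotorial `n!_F = F_n · F_{n-1} ⋯ F_1`, with `0!_F = 1`. -/
def fibotorial (n : ℕ) : ℕ := ∏ i ∈ Finset.range n, Nat.fib (i + 1)

/-- The fibonomial coefficient `C(n,k)_F = n!_F / (k!_F · (n-k)!_F)` for `k ≤ n`,
and `0` otherwise. -/
def fibnomial (n k : ℕ) : ℕ :=
  if k ≤ n then fibotorial n / (fibotorial k * fibotorial (n - k)) else 0

namespace Int

theorem fib_sub_one (x : ℤ) : fib (x - 1) = fib (x + 1) - fib x := by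
  have := fib_add_two (x - 1)
  rw [show x - 1 + 2 = x + 1 by ring, sub_add_cancel] at this
  linear_combination -this

theorem fib_five_mul (x : ℤ) :
    fib (5 * x) = 5 * fib x * (5 * fib x ^ 2 * (fib x ^ 2 + (-1) ^ x.natAbs) + 1) := by
  have hsign : ((-1 : ℤ) ^ x.natAbs) ^ 2 = 1 := by
    rw [← pow_mul, mul_comm, pow_mul, neg_one_sq, one_pow]
  have hcassini := fib_succ_mul_fib_pred_sub_fib_sq x
  rw [fib_sub_one] at hcassini
  have hfib4 : fib (4 * x) = fib (2 * x) * (2 * fib (2 * x + 1) - fib (2 * x)) := by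
    rw [← fib_two_mul, ← mul_assoc]; norm_num
  have hfib4_succ : fib (4 * x + 1) = fib (2 * x + 1) ^ 2 + fib (2 * x) ^ 2 := by
    rw [← fib_two_mul_add_one, ← mul_assoc]; norm_num
  have hfib5 : fib (5 * x) = fib (4 * x - 1) * fib x + fib (4 * x) * fib (x + 1) := by
    rw [← fib_add]; ring_nf
  rw [hfib5, fib_sub_one, hfib4_succ, hfib4, fib_two_mul, fib_two_mul_add_one]
  -- the remaining quintic identity holds modulo Cassini's identity
  linear_combination (5 * fib x * ((fib (x + 1) ^ 2 - fib x * fib (x + 1) - fib x ^ 2)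
    + (-1) ^ x.natAbs) + 25 * fib x ^ 3) * hcassini + 5 * fib x * hsign

end Int

namespace Nat

instance fact_prime_five : Fact (Nat.Prime 5) := ⟨prime_five⟩

theorem five_dvd_fib_iff {n : ℕ} : 5 ∣ fib n ↔ 5 ∣ n := by
  have hfib5 : fib 5 = 5 := rfl
  refine ⟨fun h => ?_, fun h => hfib5 ▸ fib_dvd 5 n h⟩
  by_contra hn
  have hcop : Nat.Coprime 5 n := (prime_five.coprime_iff_not_dvd).2 hn
  have := fib_gcd 5 n
  rw [hcop.gcd_eq_one, hfib5, Nat.gcd_eq_left h] at this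
  simp at this

theorem padicValNat_five_fib_five_mul {n : ℕ} (hn : n ≠ 0) :
    padicValNat 5 (fib (5 * n)) = padicValNat 5 (fib n) + 1 := by
  set k : ℤ := (fib n : ℤ) ^ 2 * ((fib n : ℤ) ^ 2 + (-1) ^ n)
  have hfib : (fib (5 * n) : ℤ) = fib n * (5 * k + 1) * (5 : ℕ) := by
    have := Int.fib_five_mul n
    rw [show (5 : ℤ) * n = ((5 * n : ℕ) : ℤ) by push_cast; rfl, Int.fib_natCast,
      Int.fib_natCast, Int.natAbs_natCast] at this
    rw [this]; push_cast; ring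
  have hfib0 : (fib n : ℤ) ≠ 0 := by exact_mod_cast (fib_pos.2 (pos_of_ne_zero hn)).ne'
  rw [← padicValInt.of_nat, ← padicValInt.of_nat, hfib,
    padicValInt_mul_eq_succ _ (mul_ne_zero hfib0 (by omega)), padicValInt.mul hfib0 (by omega),
    padicValInt.eq_zero_of_not_dvd (z := 5 * k + 1) (by omega), add_zero]

theorem padicValNat_five_fib (n : ℕ) : padicValNat 5 (fib n) = padicValNat 5 n := by
  induction n using Nat.strong_induction_on with
  | _ n ih =>
    rcases eq_or_ne n 0 with rfl | hn
    · simp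
    by_cases h5 : 5 ∣ n
    · obtain ⟨m, rfl⟩ := h5
      have hm : m ≠ 0 := by omega
      rw [padicValNat_five_fib_five_mul hm, ih m (by omega), padicValNat.mul (by norm_num) hm,
        padicValNat.self (by norm_num), add_comm]
    · rw [padicValNat.eq_zero_of_not_dvd h5,
        padicValNat.eq_zero_of_not_dvd (five_dvd_fib_iff.not.2 h5)]

end Nat

open Nat

theorem fibotorial_succ (n : ℕ) : fibotorial (n + 1) = fibotorial n * fib (n + 1) :=
  Finset.prod_range_succ _ _

theorem fibotorial_ne_zero (n : ℕ) : fibotorial n ≠ 0 :=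
  Finset.prod_ne_zero_iff.2 fun i _ => (fib_pos.2 i.succ_pos).ne'

theorem padicValNat_five_fibotorial (n : ℕ) :
    padicValNat 5 (fibotorial n) = padicValNat 5 n ! := by
  induction n with
  | zero => simp [fibotorial]
  | succ n ih =>
    rw [fibotorial_succ, factorial_succ, padicValNat.mul (fibotorial_ne_zero n)
      (fib_pos.2 n.succ_pos).ne', padicValNat.mul n.succ_ne_zero (factorial_ne_zero n), ih,
      padicValNat_five_fib, add_comm]

theorem fibotorial_mul_fibotorial_dvd :
    ∀ m n : ℕ, fibotorial m * fibotorial n ∣ fibotorial (m + n)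
  | 0, n => by simp [fibotorial]
  | m + 1, 0 => by simp [fibotorial]
  | m + 1, n + 1 => by
    have h₁ : fibotorial (m + 1) * fibotorial (n + 1) ∣ fibotorial (m + 1 + n) * fib (n + 1) := by
      rw [fibotorial_succ n, ← mul_assoc]
      exact mul_dvd_mul_right (fibotorial_mul_fibotorial_dvd (m + 1) n) _
    have h₂ : fibotorial (m + 1) * fibotorial (n + 1) ∣ fibotorial (m + 1 + n) * fib (m + 1) := by
      rw [fibotorial_succ m, mul_right_comm, show m + 1 + n = m + (n + 1) by omega]
      exact mul_dvd_mul_right (fibotorial_mul_fibotorial_dvd m (n + 1)) _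
    rw [show m + 1 + (n + 1) = m + (n + 1) + 1 by omega, fibotorial_succ (m + (n + 1)), fib_add,
      show m + (n + 1) = m + 1 + n by omega, mul_add]
    exact dvd_add (h₁.trans ⟨fib m, by ring⟩) (h₂.trans ⟨fib (n + 1 + 1), by ring⟩)
  termination_by m n => m + n

theorem fibnomial_add_mul_fibotorial_mul_fibotorial (m n : ℕ) :
    fibnomial (m + n) m * (fibotorial m * fibotorial n) = fibotorial (m + n) := by
  rw [fibnomial, if_pos (le_add_right m n), Nat.add_sub_cancel_left,
    Nat.div_mul_cancel (fibotorial_mul_fibotorial_dvd m n)]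

theorem padicValNat_five_fibnomial (m n : ℕ) :
    padicValNat 5 (fibnomial (m + n) m) = padicValNat 5 ((m + n).choose m) := by
  have hF := congrArg (padicValNat 5) (fibnomial_add_mul_fibotorial_mul_fibotorial m n)
  have hC := congrArg (padicValNat 5) (add_choose_mul_factorial_mul_factorial m n)
  rw [← choose_symm_add] at hC
  have hF0 : fibnomial (m + n) m ≠ 0 := left_ne_zero_of_mul <|
    (fibnomial_add_mul_fibotorial_mul_fibotorial m n).symm ▸ fibotorial_ne_zero (m + n)
  rw [padicValNat.mul hF0 (mul_ne_zero (fibotorial_ne_zero m) (fibotorial_ne_zero n)),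
    padicValNat.mul (fibotorial_ne_zero m) (fibotorial_ne_zero n)] at hF
  rw [mul_assoc, padicValNat.mul (choose_pos (le_add_right m n)).ne'
    (mul_ne_zero (factorial_ne_zero m) (factorial_ne_zero n)),
    padicValNat.mul (factorial_ne_zero m) (factorial_ne_zero n)] at hC
  simp only [padicValNat_five_fibotorial] at hF
  omega

theorem padicValNat_add_choose_eq_ncard_carries (p : ℕ) [Fact p.Prime] (m n : ℕ) :
    padicValNat p ((m + n).choose m) =
      {i : ℕ | p ^ (i + 1) ≤ m % p ^ (i + 1) + n % p ^ (i + 1)}.ncard := by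
  rw [add_comm m n, padicValNat_choose' (b := log p (n + m) + 1) (lt_add_one _),
    ← Set.ncard_coe_finset, eq_comm, ← Set.ncard_image_of_injective _ (add_left_injective 1)]
  congr 1
  ext j
  simp only [Set.mem_image, Set.mem_ofPred_eq, Finset.coe_filter, Finset.mem_Ico]
  constructor
  · rintro ⟨i, hcarry, rfl⟩
    have hle : p ^ (i + 1) ≤ n + m :=
      hcarry.trans (by have := mod_le m (p ^ (i + 1)); have := mod_le n (p ^ (i + 1)); omega)
    exact ⟨⟨le_add_self, Nat.lt_add_one_iff.2 (le_log_of_pow_le (Fact.out : p.Prime).one_lt hle)⟩,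
      hcarry⟩
  · rintro ⟨⟨hj, -⟩, hcarry⟩
    exact ⟨j - 1, by rwa [Nat.sub_add_cancel hj], Nat.sub_add_cancel hj⟩

/-- The highest power of 5 dividing `C(m+n, m)_F` is the number of carries when `m`
is added to `n` in base 5. -/
theorem fibnomial_five_valuation_carries (m n : ℕ) :
    padicValNat 5 (fibnomial (m + n) m) =
      Set.ncard {i : ℕ | 5 ^ (i + 1) ≤ m % 5 ^ (i + 1) + n % 5 ^ (i + 1)} := by
  rw [padicValNat_five_fibnomial, padicValNat_add_choose_eq_ncard_carries]
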